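/- Define ζ_CB(−n; z) := Σ_{m=1}^∞ (2z)^{2m} m^n / binom(2m,m) for integer n ≥ 0 and |z| < 1. Then ζ_CB(0; z) = z(z√(1−z²) + arcsin z)/(1−z²)^{3/2} (the case n = 0 of Lehmer's formula, using p_0 = q_0 = 1). -/

import Mathlib

/-!
With `a m = 4^m / ((2m+1) C(2m,m))` and `h y = ∑ a m y^(2m+1)`, the ratio
`a (m+1) / a m = (2m+2)/(2m+3)` gives the differential equation `(1 - y²) h' = 1 + y h`, `h 0 = 0`,
whose solution is `arcsin y / √(1 - y²)`. Since `(2m+2) a m = 4^(m+1) / C(2m+2,m+1)`, the series in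
question is `z (z h)' = z² h' + z h`, and the ODE turns this into the closed form.
-/

open Real

lemma summable_two_mul_add_one_mul_geometric {q : ℝ} (hq : |q| < 1) :
    Summable fun m : ℕ => (2 * (m : ℝ) + 1) * q ^ m := by
  have hq' : ‖q‖ < 1 := by simpa using hq
  refine (((summable_pow_mul_geometric_of_norm_lt_one 1 hq').mul_left 2).add
    (summable_geometric_of_norm_lt_one hq')).congr fun m => ?_
  ring

section OddSeries

noncomputable def oddSeries (c : ℕ → ℝ) (y : ℝ) : ℝ := ∑' m : ℕ, c m * y ^ (2 * m + 1)

noncomputable def oddSeriesDeriv (c : ℕ → ℝ) (y : ℝ) : ℝ :=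
  ∑' m : ℕ, (2 * (m : ℝ) + 1) * c m * y ^ (2 * m)

variable {c : ℕ → ℝ}

lemma norm_oddSeriesDeriv_term_le (hc : ∀ m, |c m| ≤ 1) (m : ℕ) {x r : ℝ} (hxr : |x| ≤ r) :
    ‖(2 * (m : ℝ) + 1) * c m * x ^ (2 * m)‖ ≤ (2 * (m : ℝ) + 1) * (r ^ 2) ^ m := by
  rw [norm_mul, norm_mul, Real.norm_eq_abs, Real.norm_eq_abs, Real.norm_eq_abs, abs_pow, pow_mul,
    abs_of_pos (by positivity : (0 : ℝ) < 2 * m + 1), mul_assoc]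
  gcongr
  exact (mul_le_of_le_one_left (by positivity) (hc m)).trans (by gcongr)

lemma summable_oddSeriesDeriv (hc : ∀ m, |c m| ≤ 1) {y : ℝ} (hy : |y| < 1) :
    Summable fun m : ℕ => (2 * (m : ℝ) + 1) * c m * y ^ (2 * m) := by
  have hy2 : |(|y| ^ 2)| < 1 := by
    rw [abs_pow, abs_abs, sq_lt_one_iff₀ (abs_nonneg y)]; exact hy
  exact .of_norm_bounded (summable_two_mul_add_one_mul_geometric hy2)
    fun m => norm_oddSeriesDeriv_term_le hc m le_rfl

lemma summable_oddSeries (hc : ∀ m, |c m| ≤ 1) {y : ℝ} (hy : |y| < 1) :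
    Summable fun m : ℕ => c m * y ^ (2 * m + 1) := by
  have hy2 : ‖|y| ^ 2‖ < 1 := by
    rw [Real.norm_eq_abs, abs_pow, abs_abs, sq_lt_one_iff₀ (abs_nonneg y)]; exact hy
  refine .of_norm_bounded ((summable_geometric_of_norm_lt_one hy2).mul_left |y|) fun m => ?_
  rw [norm_mul, Real.norm_eq_abs, Real.norm_eq_abs, abs_pow, pow_succ, pow_mul, mul_comm |y|]
  exact mul_le_of_le_one_left (by positivity) (hc m)

lemma hasDerivAt_oddSeries (hc : ∀ m, |c m| ≤ 1) {y : ℝ} (hy : |y| < 1) :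
    HasDerivAt (oddSeries c) (oddSeriesDeriv c y) y := by
  unfold oddSeries oddSeriesDeriv
  obtain ⟨r, hyr, hr1⟩ := exists_between hy
  have hr0 : 0 < r := (abs_nonneg y).trans_lt hyr
  have hr : |r ^ 2| < 1 := by rwa [abs_pow, sq_lt_one_iff₀ (abs_nonneg r), abs_of_pos hr0]
  refine hasDerivAt_tsum_of_isPreconnected (summable_two_mul_add_one_mul_geometric hr)
    (g := fun m x => c m * x ^ (2 * m + 1)) (g' := fun m x => (2 * (m : ℝ) + 1) * c m * x ^ (2 * m))
    (t := Metric.ball (0 : ℝ) r) (y₀ := 0) Metric.isOpen_ball (convex_ball 0 r).isPreconnected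
    (fun m x _ => ?_) (fun m x hx => ?_) (Metric.mem_ball_self hr0) ?_ (mem_ball_zero_iff.mpr hyr)
  · refine ((hasDerivAt_pow (2 * m + 1) x).const_mul (c m)).congr_deriv ?_
    rw [Nat.add_sub_cancel]
    push_cast
    ring
  · exact norm_oddSeriesDeriv_term_le hc m (mem_ball_zero_iff.mp hx).le
  · simp

end OddSeries

noncomputable def arcsinCoeff (m : ℕ) : ℝ := 4 ^ m / ((2 * (m : ℝ) + 1) * m.centralBinom)

lemma arcsinCoeff_pos (m : ℕ) : 0 < arcsinCoeff m := by
  have := m.centralBinom_pos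
  unfold arcsinCoeff
  positivity

lemma abs_arcsinCoeff_le_one (m : ℕ) : |arcsinCoeff m| ≤ 1 := by
  have := m.centralBinom_pos
  rw [abs_of_pos (arcsinCoeff_pos m), arcsinCoeff, div_le_one (by positivity)]
  exact_mod_cast Nat.four_pow_le_two_mul_add_one_mul_central_binom m

lemma four_pow_succ_div_centralBinom_succ (m : ℕ) :
    (4 : ℝ) ^ (m + 1) / (m + 1).centralBinom = (2 * (m : ℝ) + 2) * arcsinCoeff m := by
  have hrec : ((m : ℝ) + 1) * (m + 1).centralBinom = 2 * (2 * m + 1) * m.centralBinom := by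
    exact_mod_cast m.succ_mul_centralBinom_succ
  have := m.centralBinom_pos
  have := (m + 1).centralBinom_pos
  rw [arcsinCoeff]
  field_simp
  linear_combination (-2 * 4 ^ m : ℝ) * hrec

lemma arcsinCoeff_succ (m : ℕ) :
    (2 * (m : ℝ) + 3) * arcsinCoeff (m + 1) = (2 * (m : ℝ) + 2) * arcsinCoeff m := by
  rw [← four_pow_succ_div_centralBinom_succ, arcsinCoeff]
  field_simp
  push_cast
  ring

lemma one_sub_sq_mul_oddSeriesDeriv_arcsinCoeff {y : ℝ} (hy : |y| < 1) :
    (1 - y ^ 2) * oddSeriesDeriv arcsinCoeff y = 1 + y * oddSeries arcsinCoeff y := by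
  set f : ℕ → ℝ := fun m => (2 * (m : ℝ) + 1) * arcsinCoeff m * y ^ (2 * m)
  have hD : HasSum f (oddSeriesDeriv arcsinCoeff y) :=
    (summable_oddSeriesDeriv abs_arcsinCoeff_le_one hy).hasSum
  have hshift : HasSum (fun m => f (m + 1) - y ^ 2 * f m)
      (oddSeriesDeriv arcsinCoeff y - 1 - y ^ 2 * oddSeriesDeriv arcsinCoeff y) := by
    refine .sub ?_ (hD.mul_left _)
    simpa [f, arcsinCoeff] using (hasSum_nat_add_iff' 1).mpr hD
  have htelescope : (fun m => f (m + 1) - y ^ 2 * f m) =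
      fun m => y * (arcsinCoeff m * y ^ (2 * m + 1)) := by
    funext m
    simp only [f, Nat.cast_succ]
    linear_combination y ^ (2 * m + 2) * arcsinCoeff_succ m
  have hseries : HasSum (fun m => arcsinCoeff m * y ^ (2 * m + 1)) (oddSeries arcsinCoeff y) :=
    (summable_oddSeries abs_arcsinCoeff_le_one hy).hasSum
  rw [htelescope] at hshift
  linear_combination hshift.unique (hseries.mul_left y)

lemma oddSeries_arcsinCoeff_mul_sqrt {y : ℝ} (hy : |y| < 1) :
    oddSeries arcsinCoeff y * √(1 - y ^ 2) = arcsin y := by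
  set φ : ℝ → ℝ := fun x => oddSeries arcsinCoeff x * √(1 - x ^ 2) - arcsin x
  have hφ' : ∀ x ∈ Set.Ioo (-1 : ℝ) 1, HasDerivAt φ 0 x := by
    rintro x ⟨hx₁, hx₂⟩
    have hx : |x| < 1 := abs_lt.2 ⟨hx₁, hx₂⟩
    have hpos : 0 < 1 - x ^ 2 := by nlinarith
    have hsqrt : √(1 - x ^ 2) ^ 2 = 1 - x ^ 2 := sq_sqrt hpos.le
    have := (sqrt_pos.2 hpos).ne'
    refine (((hasDerivAt_oddSeries abs_arcsinCoeff_le_one hx).mul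
      (((hasDerivAt_pow 2 x).const_sub 1).sqrt hpos.ne')).sub
      (hasDerivAt_arcsin hx₁.ne' hx₂.ne)).congr_deriv ?_
    field_simp
    norm_num
    linear_combination 2 * oddSeriesDeriv arcsinCoeff x * hsqrt +
      2 * one_sub_sq_mul_oddSeriesDeriv_arcsinCoeff hx
  have hconst : φ y = φ 0 :=
    isOpen_Ioo.is_const_of_deriv_eq_zero isPreconnected_Ioo
      (fun x hx => (hφ' x hx).differentiableAt.differentiableWithinAt)
      (fun x hx => (hφ' x hx).deriv) (abs_lt.1 hy) (by norm_num)
  simpa [φ, oddSeries, sub_eq_zero] using hconst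

lemma hasSum_two_mul_pow_div_centralBinom {z : ℝ} (hz : |z| < 1) :
    HasSum (fun m : ℕ => (2 * z) ^ (2 * (m + 1)) / (Nat.choose (2 * (m + 1)) (m + 1) : ℝ))
      (z ^ 2 * oddSeriesDeriv arcsinCoeff z + z * oddSeries arcsinCoeff z) := by
  refine (((summable_oddSeriesDeriv abs_arcsinCoeff_le_one hz).hasSum.mul_left (z ^ 2)).add
    ((summable_oddSeries abs_arcsinCoeff_le_one hz).hasSum.mul_left z)).congr_fun fun m => ?_
  rw [mul_pow, pow_mul, ← Nat.centralBinom_eq_two_mul_choose, mul_div_right_comm,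
    show (2 : ℝ) ^ 2 = 4 by norm_num, four_pow_succ_div_centralBinom_succ]
  ring

theorem zetaCB_zero (z : ℝ) (hz : |z| < 1) :
    ∑' m : ℕ, (2 * z) ^ (2 * (m + 1)) / (Nat.choose (2 * (m + 1)) (m + 1) : ℝ) =
      z * (z * Real.sqrt (1 - z ^ 2) + Real.arcsin z) / (1 - z ^ 2) ^ ((3 : ℝ) / 2) := by
  have hpos : 0 < 1 - z ^ 2 := by nlinarith [sq_abs z, abs_nonneg z]
  have hsqrt : √(1 - z ^ 2) ^ 2 = 1 - z ^ 2 := sq_sqrt hpos.le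
  have := (sqrt_pos.2 hpos).ne'
  have hode := one_sub_sq_mul_oddSeriesDeriv_arcsinCoeff hz
  rw [(hasSum_two_mul_pow_div_centralBinom hz).tsum_eq, ← oddSeries_arcsinCoeff_mul_sqrt hz,
    rpow_div_two_eq_sqrt _ hpos.le, show (3 : ℝ) = (3 : ℕ) by norm_num, rpow_natCast]
  field_simp
  linear_combination z * (z * oddSeriesDeriv arcsinCoeff z + oddSeries arcsinCoeff z) * hsqrt +
    z ^ 2 * hode
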